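/- arXiv:1611.08049 — 2 statements merged into one kernel-verified Lean document; each statement's English description precedes it below -/
import Mathlib

section
/- Let f be twice continuously differentiable at x₀ with f(x₀) > 0 and F(x₀) < 1, where F is the CDF of f. Let M(z) = z − ∫_{-∞}^z F(u) du and H = f/(1−F). Then the function u ↦ H(M^{-1}(M(x₀) + u)) has second derivative at u = 0 equal to [(1−F)·{(1−F)f'' + 4 f f'} + 3 f³]/(1−F)^5 evaluated at x₀. -/
open MeasureTheory Set Filter Topology Function

/-!
Write `φ u = M⁻¹(M x₀ + u)`. By the inverse function theorem `φ' = 1 / M'(φ) = 1 / (1 - F(φ))`,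
so differentiating along `φ` multiplies the `x`-derivative by `1 / (1 - F)`. Applying this twice
to `H = f / (1 - F)` gives `(H' / (1 - F))' / (1 - F)` at `x₀`, which is the stated expression.
-/

theorem continuous_of_leftInverse_of_rightInverse {M Minv : ℝ → ℝ} (hM : Continuous M)
    (hl : LeftInverse Minv M) (hr : RightInverse Minv M) : Continuous Minv := by
  rcases hM.strictMono_of_inj hl.injective with hmono | hanti
  · have hMinv : Monotone Minv := fun a b hab => hmono.le_iff_le.1 (by rwa [hr a, hr b])
    exact hMinv.continuous_of_surjective hl.surjective
  · have hMinv : Monotone (Minv ∘ Neg.neg) := fun a b hab =>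
      hanti.le_iff_ge.1 (by rw [comp_apply, comp_apply, hr, hr]; exact neg_le_neg hab)
    have hsurj : Surjective (Minv ∘ Neg.neg) := hl.surjective.comp neg_surjective
    simpa only [comp_def, neg_neg] using
      (hMinv.continuous_of_surjective hsurj).comp continuous_neg

theorem iteratedDeriv_two_eq_of_eventually_hasDerivAt {𝕜 E : Type*} [NontriviallyNormedField 𝕜]
    [NormedAddCommGroup E] [NormedSpace 𝕜 E] {g g' : 𝕜 → E} {a : 𝕜} {b : E}
    (hg : ∀ᶠ x in 𝓝 a, HasDerivAt g (g' x) x) (hg' : HasDerivAt g' b a) :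
    iteratedDeriv 2 g a = b := by
  have hderiv : deriv g =ᶠ[𝓝 a] g' := hg.mono fun x hx => hx.deriv
  rw [iteratedDeriv_succ, iteratedDeriv_one, hderiv.deriv_eq, hg'.deriv]

theorem hasDerivAt_div_one_sub_comp {F f φ : ℝ → ℝ} {u f' : ℝ}
    (hF : HasDerivAt F (f (φ u)) (φ u)) (hf : HasDerivAt f f' (φ u))
    (hφ : HasDerivAt φ (1 - F (φ u))⁻¹ u) (hu : F (φ u) ≠ 1) :
    HasDerivAt (fun v => f (φ v) / (1 - F (φ v)))
      ((f' * (1 - F (φ u)) + f (φ u) ^ 2) / (1 - F (φ u)) ^ 3) u := by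
  have hne : 1 - F (φ u) ≠ 0 := sub_ne_zero.2 hu.symm
  have hnum : HasDerivAt (fun v => f (φ v)) (f' * (1 - F (φ u))⁻¹) u := hf.comp u hφ
  have hden : HasDerivAt (fun v => 1 - F (φ v)) (-(f (φ u) * (1 - F (φ u))⁻¹)) u :=
    (hF.comp u hφ).const_sub 1
  refine (hnum.div hden hne).congr_deriv ?_
  field_simp
  ring

theorem hasDerivAt_div_one_sub_pow_three {F f g : ℝ → ℝ} {x g' : ℝ}
    (hF : HasDerivAt F (f x) x) (hf : HasDerivAt f (g x) x) (hg : HasDerivAt g g' x)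
    (hx : F x ≠ 1) :
    HasDerivAt (fun y => (g y * (1 - F y) + f y ^ 2) / (1 - F y) ^ 3)
      (((1 - F x) * ((1 - F x) * g' + 4 * f x * g x) + 3 * f x ^ 3) / (1 - F x) ^ 4) x := by
  have hne : 1 - F x ≠ 0 := sub_ne_zero.2 hx.symm
  have hnum := (hg.fun_mul (hF.const_sub 1)).fun_add (hf.fun_pow 2)
  have hden := (hF.const_sub 1).fun_pow 3
  refine (hnum.div hden (pow_ne_zero 3 hne)).congr_deriv ?_
  field_simp
  ring

theorem direct_bias_second_derivative_general
    (F f M Minv : ℝ → ℝ) (x₀ : ℝ)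
    (hf : ContDiffAt ℝ 2 f x₀)
    (hf_density : ∀ x, HasDerivAt F (f x) x)
    (hFlt : F x₀ < 1)
    (hM' : ∀ z, HasDerivAt M (1 - F z) z)
    (hMinv_right : ∀ y, M (Minv y) = y)
    (hMinv_left : ∀ z, Minv (M z) = z) :
    iteratedDeriv 2
        (fun u => f (Minv (M x₀ + u)) / (1 - F (Minv (M x₀ + u)))) 0 =
      ((1 - F x₀) * ((1 - F x₀) * iteratedDeriv 2 f x₀ + 4 * f x₀ * deriv f x₀)
          + 3 * (f x₀) ^ 3) / (1 - F x₀) ^ 5 := by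
  set φ : ℝ → ℝ := fun u => Minv (M x₀ + u)
  have hMinv : Continuous Minv := continuous_of_leftInverse_of_rightInverse
    (continuous_iff_continuousAt.2 fun z => (hM' z).continuousAt) hMinv_left hMinv_right
  have hφ0 : φ 0 = x₀ := by simp [φ, hMinv_left]
  have hφ : Tendsto φ (𝓝 0) (𝓝 x₀) :=
    hφ0 ▸ (hMinv.comp (continuous_const_add (M x₀))).continuousAt
  have hφ' (u : ℝ) (hu : F (φ u) ≠ 1) : HasDerivAt φ (1 - F (φ u))⁻¹ u :=
    (HasDerivAt.of_local_left_inverse hMinv.continuousAt (hM' _) (sub_ne_zero.2 hu.symm)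
      (.of_forall hMinv_right)).comp_const_add (M x₀) u
  have hF_ne : ∀ᶠ u in 𝓝 0, F (φ u) ≠ 1 :=
    ((hf_density x₀).continuousAt.tendsto.comp hφ).eventually_ne hFlt.ne
  have hf_diff : ∀ᶠ u in 𝓝 0, DifferentiableAt ℝ f (φ u) :=
    hφ.eventually ((hf.eventually (by simp)).mono fun y hy => hy.differentiableAt (by simp))
  have hf'' : HasDerivAt (deriv f) (iteratedDeriv 2 f x₀) x₀ := by
    rw [iteratedDeriv_succ, iteratedDeriv_one]
    exact ((hf.derivWithin (m := 1) le_rfl).differentiableAt one_ne_zero).hasDerivAt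
  have hfirst : ∀ᶠ u in 𝓝 0, HasDerivAt (fun v => f (φ v) / (1 - F (φ v)))
      ((deriv f (φ u) * (1 - F (φ u)) + f (φ u) ^ 2) / (1 - F (φ u)) ^ 3) u := by
    filter_upwards [hF_ne, hf_diff] with u hu hdu
    exact hasDerivAt_div_one_sub_comp (hf_density _) hdu.hasDerivAt (hφ' u hu) hu
  have hsecond := (hasDerivAt_div_one_sub_pow_three (hf_density x₀)
    (hf.differentiableAt two_ne_zero).hasDerivAt hf'' hFlt.ne).comp_of_eq 0
    (hφ' 0 (hφ0 ▸ hFlt.ne)) hφ0.symm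
  rw [hφ0, ← div_eq_mul_inv, div_div, ← pow_succ] at hsecond
  exact iteratedDeriv_two_eq_of_eventually_hasDerivAt hfirst hsecond

/-- With M(z) = z − ∫_{-∞}^z F and H = f/(1−F), the function
u ↦ H(M⁻¹(M(x₀)+u)) has second derivative at 0 equal to
[(1−F){(1−F)f'' + 4ff'} + 3f³]/(1−F)^5 at x₀. -/
theorem direct_bias_second_derivative
    (F f M Minv : ℝ → ℝ) (x₀ : ℝ)
    (hf : ContDiffAt ℝ 2 f x₀)
    (hf_density : ∀ x, HasDerivAt F (f x) x)
    (hfpos : 0 < f x₀) (hFlt : F x₀ < 1)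
    (hM : ∀ z, M z = z - ∫ u in Iic z, F u)
    (hM' : ∀ z, HasDerivAt M (1 - F z) z)
    (hMinv_right : ∀ y, M (Minv y) = y)
    (hMinv_left : ∀ z, Minv (M z) = z) :
    iteratedDeriv 2
        (fun u => f (Minv (M x₀ + u)) / (1 - F (Minv (M x₀ + u)))) 0 =
      ((1 - F x₀) * ((1 - F x₀) * iteratedDeriv 2 f x₀ + 4 * f x₀ * deriv f x₀)
          + 3 * (f x₀) ^ 3) / (1 - F x₀) ^ 5 :=
  direct_bias_second_derivative_general F f M Minv x₀ hf hf_density hFlt hM' hMinv_right hMinv_left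
end

section
/- Suppose an estimator family satisfies the expansion b(h) = H + a₂h² + a₄h⁴ + o(h⁴) with H > 0. Then the Terrell–Scott combination satisfies b(h)^{4/3}·b(2h)^{−1/3} = H + ((2a₂² − 4a₄H)/H)·h⁴ + o(h⁴) as h → 0⁺; in particular the h² term cancels. -/
open Filter Asymptotics


lemma taylor2_rpow (p : ℝ) :
    (fun w : ℝ => (1 + w) ^ p - (1 + p * w + p * (p - 1) / 2 * w ^ 2))
      =o[nhds (0 : ℝ)] fun w => w ^ 2 := by
  set φ : ℝ → ℝ := fun w => (1 + w) ^ p - (1 + p * w + p * (p - 1) / 2 * w ^ 2) with hφ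
  set ψ : ℝ → ℝ := fun w => p * (1 + w) ^ (p - 1) - p - p * (p - 1) * w with hψdef
  -- ψ is o(w)
  have hF : HasDerivAt (fun w : ℝ => p * (1 + w) ^ (p - 1)) (p * (p - 1)) 0 := by
    have h1 : HasDerivAt (fun w : ℝ => (1 + w) ^ (p - 1))
        ((p - 1) * (1 : ℝ) ^ (p - 1 - 1) * 1) 0 := by
      have h0 : HasDerivAt (fun w : ℝ => 1 + w) 1 0 := by
        simpa using (hasDerivAt_id (0:ℝ)).const_add 1
      have hr : HasDerivAt (fun x : ℝ => x ^ (p - 1)) ((p - 1) * (1:ℝ) ^ (p - 1 - 1)) (1 + 0) := by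
        simpa using Real.hasDerivAt_rpow_const (x := (1:ℝ)) (p := p - 1) (Or.inl one_ne_zero)
      exact (hr.comp 0 h0).congr_deriv (by simp)
    simpa [Real.one_rpow] using h1.const_mul p
  have hψ : ψ =o[nhds (0 : ℝ)] fun w => w := by
    have := hF.isLittleO
    simp only [hasDerivAt_iff_isLittleO] at hF
    refine hF.congr' ?_ (by simp)
    filter_upwards with w
    simp [hψdef, Real.one_rpow]
    ring
  rw [isLittleO_iff]
  intro ε hε
  rw [isLittleO_iff] at hψ
  obtain ⟨δ, hδ, hδψ⟩ := Metric.eventually_nhds_iff.1 (hψ hε)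
  have hmem : Metric.ball (0:ℝ) (min δ (1/2)) ∈ nhds (0:ℝ) :=
    Metric.ball_mem_nhds _ (by positivity)
  filter_upwards [hmem] with w hw
  simp only [Metric.mem_ball, Real.dist_eq, sub_zero] at hw
  -- MVT on Icc (-|w|) |w|
  set s : Set ℝ := Set.Icc (-|w|) |w| with hs
  have hsub : ∀ t ∈ s, |t| ≤ |w| := by
    intro t ht
    rw [abs_le]; exact ⟨ht.1, ht.2⟩
  have hderiv : ∀ t ∈ s, HasDerivWithinAt φ (ψ t) s t := by
    intro t ht
    have htb : |t| < 1/2 := lt_of_le_of_lt (hsub t ht) (lt_of_lt_of_le hw (min_le_right _ _))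
    have hpos : (0:ℝ) < 1 + t := by
      rcases abs_lt.1 htb with ⟨h1, h2⟩; linarith
    have h0 : HasDerivAt (fun w : ℝ => 1 + w) 1 t := by
      simpa using (hasDerivAt_id t).const_add 1
    have h1 : HasDerivAt (fun w : ℝ => (1 + w) ^ p) (p * (1 + t) ^ (p - 1)) t := by
      have hr : HasDerivAt (fun x : ℝ => x ^ p) (p * (1 + t) ^ (p - 1)) (1 + t) :=
        Real.hasDerivAt_rpow_const (Or.inl (ne_of_gt hpos))
      simpa [Function.comp_def] using hr.comp t h0
    have h2 : HasDerivAt (fun w : ℝ => 1 + p * w + p * (p - 1) / 2 * w ^ 2)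
        (p + p * (p - 1) * t) t := by
      have := ((hasDerivAt_id t).const_mul p).const_add 1 |>.add
        (((hasDerivAt_pow 2 t)).const_mul (p * (p - 1) / 2))
      exact this.congr_deriv (by push_cast; ring)
    have := h1.sub h2
    refine (this.congr_deriv ?_).hasDerivWithinAt
    simp [hψdef]; ring
  have hbound : ∀ t ∈ s, ‖ψ t‖ ≤ ε * |w| := by
    intro t ht
    have htδ : dist t 0 < δ := by
      simp only [Real.dist_eq, sub_zero]
      exact lt_of_le_of_lt (hsub t ht) (lt_of_lt_of_le hw (min_le_left _ _))
    calc ‖ψ t‖ ≤ ε * ‖t‖ := hδψ htδ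
      _ ≤ ε * |w| := by
          exact mul_le_mul_of_nonneg_left (hsub t ht) hε.le
  have hconv : Convex ℝ s := convex_Icc _ _
  have h0s : (0:ℝ) ∈ s := by simp [hs]
  have hws : w ∈ s := by
    constructor
    · exact neg_abs_le w
    · exact le_abs_self w
  have := hconv.norm_image_sub_le_of_norm_hasDerivWithin_le hderiv hbound h0s hws
  have hφ0 : φ 0 = 0 := by simp [hφ, Real.one_rpow]
  rw [hφ0, sub_zero, sub_zero] at this
  calc ‖φ w‖ ≤ ε * |w| * ‖w‖ := this
    _ = ε * ‖w ^ 2‖ := by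
        rw [Real.norm_eq_abs, Real.norm_eq_abs, abs_pow]
        ring

/-- If b(h) = H + a₂h² + a₄h⁴ + o(h⁴) as h → 0⁺ with H > 0, then
b(h)^{4/3} b(2h)^{−1/3} = H + ((2a₂² − 4a₄H)/H) h⁴ + o(h⁴); in particular the
h² term cancels (Terrell–Scott bias reduction). -/
theorem terrell_scott_bias_reduction
    (b : ℝ → ℝ) (H a₂ a₄ : ℝ) (hH : 0 < H)
    (hb : (fun h => b h - (H + a₂ * h ^ 2 + a₄ * h ^ 4))
        =o[nhdsWithin 0 (Set.Ioi 0)] fun h => h ^ 4) :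
    (fun h => b h ^ ((4 : ℝ) / 3) * b (2 * h) ^ (-(1 : ℝ) / 3)
        - (H + (2 * a₂ ^ 2 - 4 * a₄ * H) / H * h ^ 4))
      =o[nhdsWithin 0 (Set.Ioi 0)] fun h => h ^ 4 := by
  have hH' : H ≠ 0 := ne_of_gt hH
  set l := nhdsWithin (0:ℝ) (Set.Ioi 0) with hl_def
  have hl : l ≤ nhds 0 := nhdsWithin_le_nhds
  -- the map h ↦ 2h preserves the filter
  have h2 : Filter.Tendsto (fun h : ℝ => 2 * h) l l := by
    rw [hl_def, tendsto_nhdsWithin_iff]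
    constructor
    · have : Filter.Tendsto (fun h : ℝ => 2 * h) (nhds 0) (nhds (2 * 0)) :=
        (continuous_const.mul continuous_id).tendsto 0
      simpa using this.mono_left hl
    · filter_upwards [self_mem_nhdsWithin] with h hh
      exact mul_pos two_pos (Set.mem_Ioi.mp hh)
  have he2 : (fun h : ℝ => b (2*h) - (H + a₂ * (2*h) ^ 2 + a₄ * (2*h) ^ 4)) =o[l]
      fun h => h ^ 4 := by
    have h16 : (fun h : ℝ => (2*h) ^ 4) =O[l] fun h => h ^ 4 := by
      have : (fun h : ℝ => (16:ℝ) * h ^ 4) =O[l] fun h => h ^ 4 :=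
        (isBigO_refl _ _).const_mul_left 16
      exact this.congr' (by filter_upwards with h; ring) Filter.EventuallyEq.rfl
    have := (hb.comp_tendsto h2).trans_isBigO h16
    simpa [Function.comp_def] using this
  have h4to0 : Filter.Tendsto (fun h : ℝ => h ^ 4) l (nhds 0) := by
    simpa using ((continuous_pow 4).tendsto (0:ℝ)).mono_left hl
  have hp2to0 : Filter.Tendsto (fun h : ℝ => h ^ 2) l (nhds 0) := by
    simpa using ((continuous_pow 2).tendsto (0:ℝ)).mono_left hl
  have he0 : Filter.Tendsto (fun h : ℝ => b h - (H + a₂ * h ^ 2 + a₄ * h ^ 4)) l (nhds 0) :=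
    hb.isBigO.trans_tendsto h4to0
  have hbH : Filter.Tendsto b l (nhds H) := by
    have h1 : Filter.Tendsto
        (fun h : ℝ => (H + a₂ * h ^ 2 + a₄ * h ^ 4) + (b h - (H + a₂ * h ^ 2 + a₄ * h ^ 4)))
        l (nhds ((H + a₂ * 0 + a₄ * 0) + 0)) :=
      ((tendsto_const_nhds.add (hp2to0.const_mul a₂)).add (h4to0.const_mul a₄)).add he0
    have h2' : Filter.Tendsto b l (nhds ((H + a₂ * 0 + a₄ * 0) + 0)) := by
      refine h1.congr ?_
      intro h; ring
    simpa using h2'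
  have hu0 : Filter.Tendsto (fun h => (b h - H)/H) l (nhds 0) := by
    have := (hbH.sub_const H).div_const H
    simpa using this
  have hb2H : Filter.Tendsto (fun h => b (2*h)) l (nhds H) := hbH.comp h2
  have hv0 : Filter.Tendsto (fun h => (b (2*h) - H)/H) l (nhds 0) := by
    have := (hb2H.sub_const H).div_const H
    simpa using this
  -- big-O facts
  have h42 : (fun h : ℝ => h ^ 4) =O[l] fun h => h ^ 2 :=
    ((isLittleO_pow_pow (by norm_num : 2 < 4)).mono hl).isBigO
  have h64o : (fun h : ℝ => h ^ 6) =o[l] fun h => h ^ 4 :=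
    (isLittleO_pow_pow (by norm_num : 4 < 6)).mono hl
  have hh2 : (fun h : ℝ => h ^ 2) =O[l] fun h => h ^ 2 := isBigO_refl _ _
  have key_o : ∀ f g : ℝ → ℝ, (f =O[l] fun h => h ^ 2) → (g =O[l] fun h => h ^ 4) →
      ((fun h => f h * g h) =o[l] fun h => h ^ 4) := by
    intro f g hf hg
    refine (hf.mul hg).trans_isLittleO ?_
    exact h64o.congr' (by filter_upwards with h; ring) Filter.EventuallyEq.rfl
  have hxO2 : (fun h => b h - H) =O[l] fun h => h ^ 2 := by
    have : (fun h : ℝ => a₂ * h ^ 2 + a₄ * h ^ 4 + (b h - (H + a₂ * h ^ 2 + a₄ * h ^ 4)))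
        =O[l] fun h => h ^ 2 :=
      ((hh2.const_mul_left a₂).add (h42.const_mul_left a₄)).add (hb.isBigO.trans h42)
    exact this.congr' (by filter_upwards with h; ring) Filter.EventuallyEq.rfl
  have hxO4 : (fun h => (b h - H) - a₂ * h ^ 2) =O[l] fun h => h ^ 4 := by
    have : (fun h : ℝ => a₄ * h ^ 4 + (b h - (H + a₂ * h ^ 2 + a₄ * h ^ 4)))
        =O[l] fun h => h ^ 4 :=
      ((isBigO_refl (fun h : ℝ => h ^ 4) l).const_mul_left a₄).add hb.isBigO
    exact this.congr' (by filter_upwards with h; ring) Filter.EventuallyEq.rfl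
  have hyO2 : (fun h => b (2*h) - H) =O[l] fun h => h ^ 2 := by
    have : (fun h : ℝ => 4*a₂ * h ^ 2 + 16*a₄ * h ^ 4
          + (b (2*h) - (H + a₂ * (2*h) ^ 2 + a₄ * (2*h) ^ 4))) =O[l] fun h => h ^ 2 :=
      ((hh2.const_mul_left (4*a₂)).add (h42.const_mul_left (16*a₄))).add (he2.isBigO.trans h42)
    exact this.congr' (by filter_upwards with h; ring) Filter.EventuallyEq.rfl
  have hyO4 : (fun h => (b (2*h) - H) - 4*a₂ * h ^ 2) =O[l] fun h => h ^ 4 := by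
    have : (fun h : ℝ => 16*a₄ * h ^ 4 + (b (2*h) - (H + a₂ * (2*h) ^ 2 + a₄ * (2*h) ^ 4)))
        =O[l] fun h => h ^ 4 :=
      ((isBigO_refl (fun h : ℝ => h ^ 4) l).const_mul_left (16*a₄)).add he2.isBigO
    exact this.congr' (by filter_upwards with h; ring) Filter.EventuallyEq.rfl
  -- little-o pieces
  have hq1 : (fun h => (4:ℝ)/3 * (b h - H) - 1/3 * (b (2*h) - H) + 4*a₄*h^4) =o[l]
      fun h => h ^ 4 := by
    have := (hb.const_mul_left ((4:ℝ)/3)).sub (he2.const_mul_left ((1:ℝ)/3))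
    exact this.congr' (by filter_upwards with h; ring) Filter.EventuallyEq.rfl
  have hq2 : (fun h => (b h - H) * (b (2*h) - H) - 4*a₂^2*h^4) =o[l] fun h => h ^ 4 := by
    have pA := key_o _ _ hyO2 hxO4
    have pB := key_o _ _ (hh2.const_mul_left a₂) hyO4
    exact (pA.add pB).congr' (by filter_upwards with h; ring) Filter.EventuallyEq.rfl
  have hq3 : (fun h => (b h - H)^2 - a₂^2*h^4) =o[l] fun h => h ^ 4 := by
    have pA := key_o _ _ (hxO2.add (hh2.const_mul_left a₂)) hxO4
    exact pA.congr' (by filter_upwards with h; ring) Filter.EventuallyEq.rfl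
  have hq4 : (fun h => (b (2*h) - H)^2 - 16*a₂^2*h^4) =o[l] fun h => h ^ 4 := by
    have pA := key_o _ _ (hyO2.add (hh2.const_mul_left (4*a₂))) hyO4
    exact pA.congr' (by filter_upwards with h; ring) Filter.EventuallyEq.rfl
  have hx2O4 : (fun h => (b h - H)^2) =O[l] fun h => h ^ 4 :=
    (hxO2.mul hxO2).congr' (by filter_upwards with h; ring)
      (by filter_upwards with h; ring)
  have hy2O4 : (fun h => (b (2*h) - H)^2) =O[l] fun h => h ^ 4 :=
    (hyO2.mul hyO2).congr' (by filter_upwards with h; ring)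
      (by filter_upwards with h; ring)
  have hq5 : (fun h => (b h - H) * (b (2*h) - H)^2) =o[l] fun h => h ^ 4 :=
    key_o _ _ hxO2 hy2O4
  have hq6 : (fun h => (b (2*h) - H) * (b h - H)^2) =o[l] fun h => h ^ 4 :=
    key_o _ _ hyO2 hx2O4
  have hq7 : (fun h => (b h - H)^2 * (b (2*h) - H)^2) =o[l] fun h => h ^ 4 :=
    key_o _ _ (hx2O4.trans h42) hy2O4
  -- Taylor remainders
  have hu2O : (fun h => ((b h - H)/H) ^ 2) =O[l] fun h => h ^ 4 := by
    have huO2 : (fun h => (b h - H)/H) =O[l] fun h => h ^ 2 :=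
      (hxO2.const_mul_left (1/H)).congr' (by filter_upwards with h; ring)
        Filter.EventuallyEq.rfl
    exact (huO2.mul huO2).congr' (by filter_upwards with h; ring)
      (by filter_upwards with h; ring)
  have hv2O : (fun h => ((b (2*h) - H)/H) ^ 2) =O[l] fun h => h ^ 4 := by
    have hvO2 : (fun h => (b (2*h) - H)/H) =O[l] fun h => h ^ 2 :=
      (hyO2.const_mul_left (1/H)).congr' (by filter_upwards with h; ring)
        Filter.EventuallyEq.rfl
    exact (hvO2.mul hvO2).congr' (by filter_upwards with h; ring)
      (by filter_upwards with h; ring)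
  have hr1 : (fun h => (1 + (b h - H)/H) ^ ((4:ℝ)/3)
      - (1 + (4:ℝ)/3 * ((b h - H)/H) + (4:ℝ)/3 * ((4:ℝ)/3 - 1)/2 * ((b h - H)/H) ^ 2))
      =o[l] fun h => h ^ 4 := by
    have := ((taylor2_rpow ((4:ℝ)/3)).comp_tendsto hu0).trans_isBigO hu2O
    simpa [Function.comp_def] using this
  have hr2 : (fun h => (1 + (b (2*h) - H)/H) ^ (-(1:ℝ)/3)
      - (1 + (-(1:ℝ)/3) * ((b (2*h) - H)/H)
        + (-(1:ℝ)/3) * ((-(1:ℝ)/3) - 1)/2 * ((b (2*h) - H)/H) ^ 2))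
      =o[l] fun h => h ^ 4 := by
    have := ((taylor2_rpow (-(1:ℝ)/3)).comp_tendsto hv0).trans_isBigO hv2O
    simpa [Function.comp_def] using this
  -- bounded factors
  have h1v : Filter.Tendsto (fun h => 1 + (b (2*h) - H)/H) l (nhds 1) := by
    simpa using (tendsto_const_nhds.add hv0)
  have hBt : Filter.Tendsto (fun h => (1 + (b (2*h) - H)/H) ^ (-(1:ℝ)/3)) l (nhds 1) := by
    have hc : ContinuousAt (fun t : ℝ => t ^ (-(1:ℝ)/3)) 1 :=
      Real.continuousAt_rpow_const 1 _ (Or.inl one_ne_zero)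
    have := hc.tendsto.comp h1v
    simpa [Function.comp_def, Real.one_rpow] using this
  have hBO : (fun h => (1 + (b (2*h) - H)/H) ^ (-(1:ℝ)/3)) =O[l] (fun _ => (1:ℝ)) :=
    hBt.isBigO_one ℝ
  have hP1t : Filter.Tendsto
      (fun h => 1 + (4:ℝ)/3 * ((b h - H)/H) + (4:ℝ)/3 * ((4:ℝ)/3 - 1)/2 * ((b h - H)/H) ^ 2)
      l (nhds (1 + (4:ℝ)/3 * 0 + (4:ℝ)/3 * ((4:ℝ)/3 - 1)/2 * 0 ^ 2)) :=
    (tendsto_const_nhds.add (hu0.const_mul _)).add ((hu0.pow 2).const_mul _)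
  have hP1O : (fun h => 1 + (4:ℝ)/3 * ((b h - H)/H)
      + (4:ℝ)/3 * ((4:ℝ)/3 - 1)/2 * ((b h - H)/H) ^ 2) =O[l] (fun _ => (1:ℝ)) :=
    hP1t.isBigO_one ℝ
  have hr1B : (fun h => ((1 + (b h - H)/H) ^ ((4:ℝ)/3)
      - (1 + (4:ℝ)/3 * ((b h - H)/H) + (4:ℝ)/3 * ((4:ℝ)/3 - 1)/2 * ((b h - H)/H) ^ 2))
      * (1 + (b (2*h) - H)/H) ^ (-(1:ℝ)/3)) =o[l] fun h => h ^ 4 :=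
    (hr1.mul_isBigO hBO).congr' Filter.EventuallyEq.rfl (by filter_upwards with h; ring)
  have hr2P1 : (fun h => ((1 + (b (2*h) - H)/H) ^ (-(1:ℝ)/3)
      - (1 + (-(1:ℝ)/3) * ((b (2*h) - H)/H)
        + (-(1:ℝ)/3) * ((-(1:ℝ)/3) - 1)/2 * ((b (2*h) - H)/H) ^ 2))
      * (1 + (4:ℝ)/3 * ((b h - H)/H) + (4:ℝ)/3 * ((4:ℝ)/3 - 1)/2 * ((b h - H)/H) ^ 2))
      =o[l] fun h => h ^ 4 :=
    (hr2.mul_isBigO hP1O).congr' Filter.EventuallyEq.rfl (by filter_upwards with h; ring)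
  -- positivity
  have hbp : ∀ᶠ h in l, 0 < b h := hbH.eventually (eventually_gt_nhds hH)
  have hbp2 : ∀ᶠ h in l, 0 < b (2*h) := h2.eventually hbp
  -- assemble the sum
  have S1 := hq1.add (hq2.const_mul_left ((4:ℝ)/3 * (-(1:ℝ)/3) / H))
  have S2 := S1.add (hq3.const_mul_left ((2:ℝ)/9 / H))
  have S3 := S2.add (hq4.const_mul_left ((2:ℝ)/9 / H))
  have S4 := S3.add (hq5.const_mul_left ((4:ℝ)/3 * ((2:ℝ)/9) / H^2))
  have S5 := S4.add (hq6.const_mul_left ((2:ℝ)/9 * (-(1:ℝ)/3) / H^2))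
  have S6 := S5.add (hq7.const_mul_left (((2:ℝ)/9)^2 / H^3))
  have S7 := S6.add (hr1B.const_mul_left H)
  have S := S7.add (hr2P1.const_mul_left H)
  refine S.congr' ?_ Filter.EventuallyEq.rfl
  filter_upwards [hbp, hbp2] with h hb1 hb2
  have h1u : 1 + (b h - H)/H = b h / H := by field_simp; ring
  have h1v' : 1 + (b (2*h) - H)/H = b (2*h) / H := by field_simp; ring
  have hprod : b h ^ ((4:ℝ)/3) * b (2*h) ^ (-(1:ℝ)/3)
      = H * ((1 + (b h - H)/H) ^ ((4:ℝ)/3) * (1 + (b (2*h) - H)/H) ^ (-(1:ℝ)/3)) := by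
    rw [h1u, h1v']
    have e1 : b h ^ ((4:ℝ)/3) = H ^ ((4:ℝ)/3) * (b h / H) ^ ((4:ℝ)/3) := by
      rw [← Real.mul_rpow hH.le (div_nonneg hb1.le hH.le)]
      congr 1
      field_simp
    have e2 : b (2*h) ^ (-(1:ℝ)/3) = H ^ (-(1:ℝ)/3) * (b (2*h) / H) ^ (-(1:ℝ)/3) := by
      rw [← Real.mul_rpow hH.le (div_nonneg hb2.le hH.le)]
      congr 1
      field_simp
    have e3 : H ^ ((4:ℝ)/3) * H ^ (-(1:ℝ)/3) = H := by
      rw [← Real.rpow_add hH]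
      norm_num
    rw [e1, e2]
    calc (H ^ ((4:ℝ)/3) * (b h / H) ^ ((4:ℝ)/3)) * (H ^ (-(1:ℝ)/3) * (b (2*h) / H) ^ (-(1:ℝ)/3))
        = (H ^ ((4:ℝ)/3) * H ^ (-(1:ℝ)/3))
          * ((b h / H) ^ ((4:ℝ)/3) * (b (2*h) / H) ^ (-(1:ℝ)/3)) := by ring
      _ = H * ((b h / H) ^ ((4:ℝ)/3) * (b (2*h) / H) ^ (-(1:ℝ)/3)) := by rw [e3]
  rw [hprod]
  field_simp
  ring
end
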